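/- In ℝ³ with the standard inner product, the face-centered cubic lattice L generated by (1,1,0), (1,0,1), (0,1,1) satisfies λ₁(L) = √2, its dual lattice L* (the body-centered cubic lattice scaled appropriately) satisfies λ₁(L*) = √3/2, and hence λ₁(L)·λ₁(L*) = √(3/2). -/

import Mathlib

noncomputable section

/-- The minimal Euclidean norm of a nonzero vector of a set in `ℝ³`. -/
def lam (S : Set (EuclideanSpace ℝ (Fin 3))) : ℝ := sInf (norm '' {v ∈ S | v ≠ 0})

/-- The dual lattice of a subset of Euclidean `ℝ³`. -/
def dualLat (L : Set (EuclideanSpace ℝ (Fin 3))) : Set (EuclideanSpace ℝ (Fin 3)) :=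
  {v | ∀ l ∈ L, ∃ n : ℤ, (inner ℝ v l : ℝ) = (n : ℝ)}

/-- The face-centered cubic lattice, generated by `(1,1,0)`, `(1,0,1)`, `(0,1,1)`. -/
def fccLattice : Set (EuclideanSpace ℝ (Fin 3)) :=
  {v | ∃ a b c : ℤ,
    v = a • (WithLp.equiv 2 (Fin 3 → ℝ)).symm ![1, 1, 0]
      + b • (WithLp.equiv 2 (Fin 3 → ℝ)).symm ![1, 0, 1]
      + c • (WithLp.equiv 2 (Fin 3 → ℝ)).symm ![0, 1, 1]}

/-! The face-centered cubic lattice is the checkerboard lattice `{x ∈ ℤ³ : x₀ + x₁ + x₂ even}`,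
and its dual is `½ {p ∈ ℤ³ : p₀ ≡ p₁ ≡ p₂ mod 2}`. A nonzero checkerboard vector has either two
nonzero coordinates or a single nonzero even one, so its squared norm is at least `2`, attained
at `(1,1,0)`. A nonzero `p` with coordinates of equal parity has `|p|² ≥ 3` (all odd) or
`|p|² ≥ 4` (all even), so `λ₁(L*)² = 3/4`, attained at `(½,½,½)`. -/

theorem Int.eq_zero_or_one_le_sq_or_four_le_sq (t : ℤ) :
    t = 0 ∨ (t % 2 = 1 ∧ 1 ≤ t ^ 2) ∨ (t % 2 = 0 ∧ 4 ≤ t ^ 2) := by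
  rcases eq_or_ne t 0 with rfl | ht
  · exact Or.inl rfl
  have ht2 : 0 < t ^ 2 := by positivity
  rcases Int.even_or_odd' t with ⟨k, rfl | rfl⟩
  · have hk : k ≠ 0 := by omega
    have hk2 : 0 < k ^ 2 := by positivity
    exact Or.inr (Or.inr ⟨by omega, by nlinarith⟩)
  · exact Or.inr (Or.inl ⟨by omega, by omega⟩)

theorem Int.two_le_sq_add_sq_add_sq {x y z : ℤ} (hxyz : Even (x + y + z))
    (h : ¬(x = 0 ∧ y = 0 ∧ z = 0)) : 2 ≤ x ^ 2 + y ^ 2 + z ^ 2 := by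
  rw [Int.even_iff] at hxyz
  rcases x.eq_zero_or_one_le_sq_or_four_le_sq with rfl | hx | hx <;>
  rcases y.eq_zero_or_one_le_sq_or_four_le_sq with rfl | hy | hy <;>
  rcases z.eq_zero_or_one_le_sq_or_four_le_sq with rfl | hz | hz <;>
  (try norm_num at h hxyz ⊢) <;> omega

theorem Int.three_le_sq_add_sq_add_sq {p q r : ℤ} (hpq : p ≡ q [ZMOD 2]) (hqr : q ≡ r [ZMOD 2])
    (h : ¬(p = 0 ∧ q = 0 ∧ r = 0)) : 3 ≤ p ^ 2 + q ^ 2 + r ^ 2 := by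
  unfold Int.ModEq at hpq hqr
  rcases p.eq_zero_or_one_le_sq_or_four_le_sq with rfl | hp | hp <;>
  rcases q.eq_zero_or_one_le_sq_or_four_le_sq with rfl | hq | hq <;>
  rcases r.eq_zero_or_one_le_sq_or_four_le_sq with rfl | hr | hr <;>
  (try norm_num at h hpq hqr ⊢) <;> omega

theorem EuclideanSpace.norm_sq_toLp_fin_three (x y z : ℝ) :
    ‖!₂[x, y, z]‖ ^ 2 = x ^ 2 + y ^ 2 + z ^ 2 := by
  simp [EuclideanSpace.norm_sq_eq, Fin.sum_univ_three]

theorem EuclideanSpace.inner_eq_fin_three (v w : EuclideanSpace ℝ (Fin 3)) :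
    inner ℝ v w = v 0 * w 0 + v 1 * w 1 + v 2 * w 2 := by
  simp [PiLp.inner_apply, Fin.sum_univ_three, mul_comm]

theorem lam_eq_sqrt {S : Set (EuclideanSpace ℝ (Fin 3))} {m : ℝ}
    (hattained : ∃ v ∈ S, v ≠ 0 ∧ ‖v‖ ^ 2 = m) (hle : ∀ v ∈ S, v ≠ 0 → m ≤ ‖v‖ ^ 2) :
    lam S = √m := by
  obtain ⟨v, hvS, hv0, rfl⟩ := hattained
  refine IsLeast.csInf_eq ⟨⟨v, ⟨hvS, hv0⟩, (Real.sqrt_sq (norm_nonneg v)).symm⟩, ?_⟩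
  rintro _ ⟨w, ⟨hwS, hw0⟩, rfl⟩
  simpa [Real.sqrt_sq (norm_nonneg _)] using Real.sqrt_le_sqrt (hle w hwS hw0)

theorem mem_fccLattice_iff {v : EuclideanSpace ℝ (Fin 3)} :
    v ∈ fccLattice ↔ ∃ x y z : ℤ, Even (x + y + z) ∧ v = !₂[(x : ℝ), y, z] := by
  have combination (a b c : ℤ) : a • (WithLp.equiv 2 (Fin 3 → ℝ)).symm ![1, 1, 0]
      + b • (WithLp.equiv 2 (Fin 3 → ℝ)).symm ![1, 0, 1]
      + c • (WithLp.equiv 2 (Fin 3 → ℝ)).symm ![0, 1, 1] = !₂[(a + b : ℝ), a + c, b + c] := by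
    ext i; fin_cases i <;> simp
  constructor
  · rintro ⟨a, b, c, rfl⟩
    exact ⟨a + b, a + c, b + c, ⟨a + b + c, by ring⟩, by rw [combination]; push_cast; rfl⟩
  · rintro ⟨x, y, z, ⟨k, hk⟩, rfl⟩
    refine ⟨k - z, k - y, k - x, ?_⟩
    rw [combination]
    have hk' : (x + y + z : ℝ) = k + k := by exact_mod_cast hk
    ext i; fin_cases i <;> simp <;> linarith

theorem mem_dualLat_fccLattice_iff {v : EuclideanSpace ℝ (Fin 3)} :
    v ∈ dualLat fccLattice ↔
      ∃ p q r : ℤ, p ≡ q [ZMOD 2] ∧ q ≡ r [ZMOD 2] ∧ v = !₂[(p : ℝ) / 2, q / 2, r / 2] := by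
  constructor
  · intro hv
    have pairing (x y z : ℤ) (h : Even (x + y + z)) :
        ∃ n : ℤ, v 0 * x + v 1 * y + v 2 * z = n := by
      simpa [EuclideanSpace.inner_eq_fin_three] using hv _ (mem_fccLattice_iff.2 ⟨x, y, z, h, rfl⟩)
    obtain ⟨n₁, h₁⟩ := pairing 1 1 0 (by decide)
    obtain ⟨n₂, h₂⟩ := pairing 1 0 1 (by decide)
    obtain ⟨n₃, h₃⟩ := pairing 0 1 1 (by decide)
    refine ⟨n₁ + n₂ - n₃, n₁ - n₂ + n₃, -n₁ + n₂ + n₃, ?_, ?_, ?_⟩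
    · exact Int.modEq_iff_dvd.2 ⟨n₃ - n₂, by ring⟩
    · exact Int.modEq_iff_dvd.2 ⟨n₂ - n₁, by ring⟩
    · push_cast at h₁ h₂ h₃ ⊢
      ext i; fin_cases i <;> simp <;> linarith
  · rintro ⟨p, q, r, hpq, hqr, rfl⟩ l hl
    obtain ⟨x, y, z, ⟨k, hk⟩, rfl⟩ := mem_fccLattice_iff.1 hl
    obtain ⟨s, hs⟩ := hpq.dvd
    obtain ⟨t, ht⟩ := hqr.dvd
    refine ⟨p * k + s * y + (s + t) * z, ?_⟩
    have hk' : (x + y + z : ℝ) = k + k := by exact_mod_cast hk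
    have hs' : (q - p : ℝ) = 2 * s := by exact_mod_cast hs
    have ht' : (r - q : ℝ) = 2 * t := by exact_mod_cast ht
    simp only [EuclideanSpace.inner_eq_fin_three, Fin.isValue, Matrix.cons_val_zero,
      Matrix.cons_val_one, Matrix.cons_val, Int.cast_add, Int.cast_mul]
    linear_combination (p / 2 : ℝ) * hk' + y * hs' / 2 + z * (hs' + ht') / 2

theorem lam_fccLattice : lam fccLattice = √2 := by
  refine lam_eq_sqrt ⟨!₂[1, 1, 0], mem_fccLattice_iff.2 ⟨1, 1, 0, by decide, by simp⟩, by simp,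
    by rw [EuclideanSpace.norm_sq_toLp_fin_three]; norm_num⟩ ?_
  rintro v hv hv0
  obtain ⟨x, y, z, hxyz, rfl⟩ := mem_fccLattice_iff.1 hv
  have hxyz0 : ¬(x = 0 ∧ y = 0 ∧ z = 0) := by rintro ⟨rfl, rfl, rfl⟩; simp at hv0
  rw [EuclideanSpace.norm_sq_toLp_fin_three]
  exact_mod_cast Int.two_le_sq_add_sq_add_sq hxyz hxyz0

theorem lam_dualLat_fccLattice : lam (dualLat fccLattice) = √(3 / 4) := by
  refine lam_eq_sqrt ⟨!₂[1 / 2, 1 / 2, 1 / 2],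
    mem_dualLat_fccLattice_iff.2 ⟨1, 1, 1, rfl, rfl, by simp⟩, by simp,
    by rw [EuclideanSpace.norm_sq_toLp_fin_three]; norm_num⟩ ?_
  rintro v hv hv0
  obtain ⟨p, q, r, hpq, hqr, rfl⟩ := mem_dualLat_fccLattice_iff.1 hv
  have hpqr0 : ¬(p = 0 ∧ q = 0 ∧ r = 0) := by rintro ⟨rfl, rfl, rfl⟩; simp at hv0
  have h3 : (3 : ℝ) ≤ p ^ 2 + q ^ 2 + r ^ 2 := by
    exact_mod_cast Int.three_le_sq_add_sq_add_sq hpq hqr hpqr0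
  rw [EuclideanSpace.norm_sq_toLp_fin_three]
  linarith

/-- For the face-centered cubic lattice `L`: `λ₁(L) = √2`, `λ₁(L*) = √3/2`, and hence
`λ₁(L)·λ₁(L*) = √(3/2)`, the Bergé–Martinet constant `γ'₃`. -/
theorem fcc_attains_bergeMartinet :
    lam fccLattice = Real.sqrt 2 ∧
    lam (dualLat fccLattice) = Real.sqrt 3 / 2 ∧
    lam fccLattice * lam (dualLat fccLattice) = Real.sqrt (3 / 2) := by
  have hsqrt : √(3 / 4) = √3 / 2 := by
    rw [Real.sqrt_div' _ (by norm_num : (0 : ℝ) ≤ 4)]; norm_num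
  refine ⟨lam_fccLattice, lam_dualLat_fccLattice.trans hsqrt, ?_⟩
  rw [lam_fccLattice, lam_dualLat_fccLattice, ← Real.sqrt_mul zero_le_two]
  norm_num
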